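/- For all integers d ≥ 0 and n ≥ 2(d+1), every 𝐁_{n,d}-free graph G satisfies χ(G) ≤ g_{n,d}(ω(G)) (where for a graph with no vertices this holds trivially; for ω(G) ≥ 1 the value g_{n,d}(ω(G)) is given by the recursion). -/

import Mathlib

/-!
Induction on `d`. For `d = 0`, a vertex of degree at least `n − 1` together with `n − 1` of its
neighbours induces a member of `𝐁_{n,0}`, so all degrees are at most `n − 2` and greedy colouring
uses `n − 1` colours.

For `d > 0` fix a maximum clique `v₀, …, v_{ω−1}`. Every vertex `x` misses some `vₜ`; let
`i ≤ j` be the first and last such indices. The vertices with span `(i, j)` are adjacent to the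
`ω − k` clique vertices outside `[i, j]`, where `k = j − i + 1`, so they induce a graph of clique
number at most `k`. For `i < j` they are moreover non-adjacent to the edge `vᵢvⱼ`, so a member of
`𝐁_{m,d−1}` among them, joined with `vᵢvⱼ` and `n − m − 2 ≤ ω − k` outer clique vertices,
would induce a member of `𝐁_{n,d}`; here `m = max(n + k − ω − 2, 2d)`. Colouring the classes
separately by induction, and noting that exactly `ω − k + 1` classes have `j − i + 1 = k`, gives
the sum defining `g_{n,d}(ω)`.
-/

open SimpleGraph

/-- The join `K_m + H` construction: disjoint union with all edges in between. -/
def graphJoin {α β : Type*} (G : SimpleGraph α) (H : SimpleGraph β) :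
    SimpleGraph (α ⊕ β) where
  Adj x y :=
    match x, y with
    | Sum.inl a, Sum.inl b => G.Adj a b
    | Sum.inr a, Sum.inr b => H.Adj a b
    | Sum.inl _, Sum.inr _ => True
    | Sum.inr _, Sum.inl _ => True
  symm := ⟨by rintro (a|a) (b|b) h <;> simp_all [SimpleGraph.adj_comm]⟩
  loopless := ⟨by rintro (a|a) h <;> simp_all⟩

/-- `InB n d V H` says that the graph `H` on vertex type `V` belongs (up to
isomorphism) to the family `𝐁_{n,d}`: `𝐁_{n,0}` consists of the graphs on `n`
vertices having a vertex adjacent to all other vertices, and for `d > 0`,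
`𝐁_{n,d} = ⋃_{m=2d}^{n−2} { K_{n−m−2} + (K₂ ∪ H') : H' ∈ 𝐁_{m,d−1} }`. -/
def InB : ℕ → ℕ → (V : Type) → SimpleGraph V → Prop
  | n, 0, V, H => Nat.card V = n ∧ ∃ v : V, ∀ w : V, w ≠ v → H.Adj v w
  | n, d + 1, _, H => ∃ m : ℕ, 2 * (d + 1) ≤ m ∧ m ≤ n - 2 ∧
      ∃ (W : Type) (H' : SimpleGraph W), InB m d W H' ∧
        Nonempty (H ≃g graphJoin (⊤ : SimpleGraph (Fin (n - m - 2)))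
          ((⊤ : SimpleGraph (Fin 2)) ⊕g H'))

/-- A graph `G` is `𝐁_{n,d}`-free if no induced subgraph of `G` is isomorphic to
a member of `𝐁_{n,d}`. -/
def BFree (n d : ℕ) {V : Type} (G : SimpleGraph V) : Prop :=
  ∀ (W : Type) (H : SimpleGraph W), InB n d W H → IsEmpty (H ↪g G)

/-- The bounding function `g_{n,d}` (defined here for all `ω`, with value `1`
for `ω ≤ 1`): `g_{n,d}(1) = 1`, `g_{n,0}(ω) = n − 1` for `ω > 1`, and
`g_{n,d}(ω) = ∑_{k=1}^{ω} (ω−k+1) · g_{max(n+k−ω−2, 2d), d−1}(k)` for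
`ω > 1`, `d > 0`. -/
def g : ℕ → ℕ → ℕ → ℕ
  | n, 0, ω => if ω ≤ 1 then 1 else n - 1
  | n, d + 1, ω =>
    if ω ≤ 1 then 1
    else ∑ k ∈ Finset.Icc 1 ω, (ω - k + 1) * g (max (n + k - ω - 2) (2 * (d + 1))) d k
termination_by n d ω => d

open Finset

lemma g_one (n d : ℕ) : g n d 1 = 1 := by
  cases d <;> simp [g]

lemma one_le_g {n : ℕ} (hn : 2 ≤ n) (d ω : ℕ) : 1 ≤ g n d ω := by
  cases d with
  | zero => unfold g; split_ifs <;> omega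
  | succ d =>
    unfold g
    split_ifs with hω
    · rfl
    · refine le_trans ?_ (single_le_sum (fun _ _ ↦ Nat.zero_le _) (left_mem_Icc.mpr (by omega)))
      rw [g_one]
      omega

lemma g_monotone {n : ℕ} (hn : 2 ≤ n) (d : ℕ) : Monotone (g n d) := by
  induction d generalizing n with
  | zero => intro a b hab; unfold g; split <;> split <;> omega
  | succ d ih =>
    refine monotone_nat_of_le_succ fun ω ↦ ?_
    by_cases hω : ω ≤ 1
    · rw [g, if_pos hω]
      exact one_le_g hn _ _
    rw [g, g, if_neg hω, if_neg (by omega)]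
    set f : ℕ → ℕ → ℕ := fun ω k ↦ (ω - k + 1) * g (max (n + k - ω - 2) (2 * (d + 1))) d k
    calc ∑ k ∈ Icc 1 ω, f ω k ≤ ∑ k ∈ Icc 1 ω, f (ω + 1) (k + 1) := by
          refine sum_le_sum fun k _ ↦ ?_
          simp only [f, show ∀ a, a + (k + 1) - (ω + 1) = a + k - ω by omega, Nat.add_sub_add_right]
          exact Nat.mul_le_mul_left _ (ih (le_trans (by omega) (le_max_right _ _)) k.le_succ)
      _ = ∑ k ∈ Icc 2 (ω + 1), f (ω + 1) k := by
          rw [← map_add_right_Icc 1 ω 1, sum_map]; rfl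
      _ ≤ ∑ k ∈ Icc 1 (ω + 1), f (ω + 1) k :=
          sum_le_sum_of_subset (Icc_subset_Icc_left one_le_two)

theorem sum_pairs_le_eq_sum_Icc {M : Type*} [AddCommMonoid M] (ω : ℕ) (F : ℕ → M) :
    ∑ p ∈ univ.filter (fun p : Fin ω × Fin ω ↦ p.1 ≤ p.2), F (p.2 - p.1 + 1) =
      ∑ k ∈ Icc 1 ω, (ω - k + 1) • F k := by
  have : ∀ k, (ω - k + 1) • F k = ∑ _i ∈ range (ω - k + 1), F k := by simp
  rw [sum_congr rfl fun k _ ↦ this k, sum_sigma']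
  refine sum_bij' (fun p _ ↦ ⟨p.2 - p.1 + 1, p.1⟩)
    (fun x hx ↦ (⟨x.2, by simp at hx; omega⟩, ⟨x.2 + x.1 - 1, by simp at hx; omega⟩))
    ?_ ?_ ?_ ?_ fun _ _ ↦ rfl
  · intro p hp
    simp only [mem_filter, mem_univ, true_and, Fin.le_def] at hp
    simp only [mem_sigma, mem_Icc, mem_range]
    omega
  · rintro ⟨k, r⟩ hx
    simp only [mem_sigma, mem_Icc, mem_range] at hx
    simp only [mem_filter, mem_univ, true_and, Fin.le_def]
    omega
  · intro p hp
    simp only [mem_filter, mem_univ, true_and, Fin.le_def] at hp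
    exact Prod.ext rfl (Fin.ext (by simp only; omega))
  · rintro ⟨k, r⟩ hx
    simp only [mem_sigma, mem_Icc, mem_range] at hx
    simp only [Sigma.mk.injEq, heq_eq_eq, and_true]
    omega

namespace SimpleGraph.Embedding

variable {α β V : Type*} {G₁ : SimpleGraph α} {G₂ : SimpleGraph β} {G : SimpleGraph V}

def joinElim (f₁ : G₁ ↪g G) (f₂ : G₂ ↪g G) (h : ∀ a b, G.Adj (f₁ a) (f₂ b)) :
    graphJoin G₁ G₂ ↪g G where
  toFun := Sum.elim f₁ f₂
  inj' := f₁.injective.sumElim f₂.injective fun a b ↦ (h a b).ne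
  map_rel_iff' := by
    rintro (a | a) (b | b) <;> simp [graphJoin, h, (h _ _).symm]

def sumElim (f₁ : G₁ ↪g G) (f₂ : G₂ ↪g G) (hne : ∀ a b, f₁ a ≠ f₂ b)
    (h : ∀ a b, ¬ G.Adj (f₁ a) (f₂ b)) : G₁ ⊕g G₂ ↪g G where
  toFun := Sum.elim f₁ f₂
  inj' := f₁.injective.sumElim f₂.injective hne
  map_rel_iff' := by
    rintro (a | a) (b | b) <;> simp [h, fun a b ↦ mt G.adj_symm (h b a)]

end SimpleGraph.Embedding

namespace SimpleGraph

variable {V : Type*} {G : SimpleGraph V}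

theorem colorable_one_of_cliqueNum_le_one [Finite V] (h : G.cliqueNum ≤ 1) : G.Colorable 1 :=
  colorable_one_iff.mpr <| cliqueFree_two.mp fun s hs ↦ by
    have := hs.card_eq ▸ hs.isClique.card_le_cliqueNum
    omega

theorem colorable_succ_of_forall_degree_le [Fintype V] [DecidableRel G.Adj] {D : ℕ}
    (h : ∀ v, G.degree v ≤ D) : G.Colorable (D + 1) := by
  classical
  suffices ∀ s : Finset V, ∃ c : V → Fin (D + 1), ∀ x ∈ s, ∀ y ∈ s, G.Adj x y → c x ≠ c y by
    obtain ⟨c, hc⟩ := this univ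
    exact ⟨⟨c, fun hxy ↦ hc _ (mem_univ _) _ (mem_univ _) hxy⟩⟩
  intro s
  induction s using Finset.induction_on with
  | empty => exact ⟨fun _ ↦ 0, by simp⟩
  | insert a s ha ih =>
    obtain ⟨c, hc⟩ := ih
    obtain ⟨k, -, hk⟩ : ∃ k ∈ univ, k ∉ (G.neighborFinset a).image c := by
      refine exists_mem_notMem_of_card_lt_card ?_
      simpa using (card_image_le.trans (h a)).trans_lt D.lt_succ_self
    have hne : ∀ y ∈ s, y ≠ a := fun y hy hya ↦ ha (hya ▸ hy)
    have hk' : ∀ y, G.Adj a y → k ≠ c y := fun y hy hky ↦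
      hk (mem_image.mpr ⟨y, (mem_neighborFinset _ _ _).mpr hy, hky.symm⟩)
    refine ⟨Function.update c a k, ?_⟩
    simp only [mem_insert]
    rintro x (rfl | hx) y (rfl | hy) hxy
    · exact (G.loopless.irrefl _ hxy).elim
    · simpa [hne y hy] using hk' y hxy
    · simpa [hne x hx] using (hk' x hxy.symm).symm
    · simpa [hne x hx, hne y hy] using hc x hx y hy hxy

theorem colorable_sum_of_fibers {ι : Type*} (f : V → ι) (s : Finset ι) (hf : ∀ x, f x ∈ s)
    (c : ι → ℕ) (h : ∀ i ∈ s, (G.induce (f ⁻¹' {i})).Colorable (c i)) :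
    G.Colorable (∑ i ∈ s, c i) := by
  have C i (hi : i ∈ s) : (G.induce (f ⁻¹' {i})).Coloring (Fin (c i)) := (h i hi).some
  -- stated for arbitrary class indices so that their equality can be substituted
  have key : ∀ x y i j (hx : f x = i) (hy : f y = j) (hi : i ∈ s) (hj : j ∈ s), G.Adj x y →
      (⟨⟨i, hi⟩, C i hi ⟨x, hx⟩⟩ : Σ i : s, Fin (c i)) ≠ ⟨⟨j, hj⟩, C j hj ⟨y, hy⟩⟩ := by
    rintro x y i j hx hy hi hj hxy heq
    obtain ⟨⟨⟩, hC⟩ := Sigma.mk.inj_iff.mp heq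
    exact (C i hi).valid (show (G.induce _).Adj ⟨x, hx⟩ ⟨y, hy⟩ from hxy) (eq_of_heq hC)
  have := (Coloring.mk (fun x ↦ (⟨⟨f x, hf x⟩, C _ (hf x) ⟨x, rfl⟩⟩ : Σ i : s, Fin (c i)))
    fun hxy ↦ key _ _ _ _ rfl rfl _ _ hxy).colorable
  simpa [sum_attach s c] using this

theorem cliqueNum_induce_add_card_le [Fintype V] {ι : Type*} [Fintype ι]
    (K : (⊤ : SimpleGraph ι) ↪g G) {S : Set V} (hKS : ∀ a, ∀ x ∈ S, G.Adj (K a) x) :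
    (G.induce S).cliqueNum + Fintype.card ι ≤ G.cliqueNum := by
  classical
  obtain ⟨t, ht⟩ := (G.induce S).exists_isNClique_cliqueNum
  have hA := (isNClique_induce_iff S t _).mp ht
  have hB := isNClique_map_copy_top K.toCopy
  have hdisj : Disjoint (t.map (.subtype _)) (univ.map K.toCopy.toEmbedding) := by
    refine Finset.disjoint_left.mpr fun y hyS hyK ↦ ?_
    obtain ⟨x, -, rfl⟩ := mem_map.mp hyS
    obtain ⟨a, -, hax⟩ := mem_map.mp hyK
    exact G.loopless.irrefl _ (hax ▸ hKS a _ x.2)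
  have hclique : G.IsClique ↑(t.map (.subtype _) ∪ univ.map K.toCopy.toEmbedding) := by
    rw [coe_union, isClique_iff, Set.pairwise_union]
    refine ⟨hA.isClique, hB.isClique, fun y hyS z hzK _ ↦ ?_⟩
    obtain ⟨x, -, rfl⟩ := mem_map.mp hyS
    obtain ⟨a, -, rfl⟩ := mem_map.mp hzK
    exact ⟨(hKS a _ x.2).symm, hKS a _ x.2⟩
  have := hclique.card_le_cliqueNum
  rwa [card_union_of_disjoint hdisj, hA.card_eq, hB.card_eq] at this

theorem exists_not_adj_of_top_embedding [Fintype V]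
    (K : (⊤ : SimpleGraph (Fin G.cliqueNum)) ↪g G) (x : V) : ∃ t, ¬ G.Adj (K t) x := by
  by_contra! h
  have hS := cliqueNum_induce_add_card_le K (S := {x}) fun t y hy ↦ hy ▸ h t
  have h1 : 1 ≤ (G.induce {x}).cliqueNum :=
    IsClique.card_le_cliqueNum (t := {⟨x, rfl⟩}) (tc := by simp)
  simp only [Fintype.card_fin] at hS
  omega

end SimpleGraph

theorem Fin.card_coe_compl_Icc {ω : ℕ} (i j : Fin ω) :
    Fintype.card ↥(Icc i j)ᶜ = ω - (j + 1 - i) := by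
  rw [Fintype.card_coe, card_compl, Fin.card_Icc, Fintype.card_fin]

namespace SimpleGraph

variable {V : Type} {G : SimpleGraph V}

theorem degree_le_of_bFree_zero [Fintype V] [DecidableRel G.Adj] {n : ℕ} (hn : 0 < n)
    (hG : BFree n 0 G) (v : V) : G.degree v ≤ n - 2 := by
  classical
  by_contra! h
  obtain ⟨t, hts, htc⟩ := exists_subset_card_eq (s := G.neighborFinset v) (n := n - 1)
    (by rw [card_neighborFinset_eq_degree]; omega)
  have hvt : v ∉ t := fun hv ↦ G.loopless.irrefl v ((mem_neighborFinset _ _ _).mp (hts hv))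
  refine (hG _ (G.induce ↑(insert v t)) ⟨?_, ⟨v, by simp⟩, ?_⟩).false (Embedding.induce _)
  · rw [Nat.card_coe_set_eq, Set.ncard_coe_finset, card_insert_of_notMem hvt, htc]
    omega
  · rintro ⟨w, hw⟩ hwv
    have hwt : w ∈ t := (mem_insert.mp hw).resolve_left fun h ↦ hwv (Subtype.ext h)
    exact (G.mem_neighborFinset v w).mp (hts hwt)

theorem bFree_induce_of_join {n m d : ℕ} (hG : BFree n (d + 1) G)
    (hm : 2 * (d + 1) ≤ m) (hmn : m ≤ n - 2)
    (K : (⊤ : SimpleGraph (Fin (n - m - 2))) ↪g G) (e : (⊤ : SimpleGraph (Fin 2)) ↪g G)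
    (hKe : ∀ a b, G.Adj (K a) (e b)) {S : Set V}
    (hKS : ∀ a, ∀ x ∈ S, G.Adj (K a) x) (heS : ∀ b, ∀ x ∈ S, ¬ G.Adj (e b) x) :
    BFree m d (G.induce S) := by
  refine fun W H' hH' ↦ ⟨fun f ↦ ?_⟩
  have hne b x (hx : x ∈ S) : e b ≠ x := by
    rintro rfl
    exact heS (b + 1) _ hx (e.map_adj_iff.mpr (by fin_cases b <;> decide))
  refine (hG _ _ ⟨m, hm, hmn, W, H', hH', ⟨Iso.refl⟩⟩).false
    (K.joinElim (e.sumElim ((Embedding.induce S).comp f) (fun b w ↦ hne b _ (f w).2)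
      fun b w ↦ heS b _ (f w).2) ?_)
  rintro a (b | w)
  · exact hKe a b
  · exact hKS a _ (f w).2

variable (K : (⊤ : SimpleGraph (Fin G.cliqueNum)) ↪g G)

open Classical in
noncomputable def nonAdjIndices (x : V) : Finset (Fin G.cliqueNum) := {t | ¬ G.Adj (K t) x}

theorem mem_nonAdjIndices {x : V} {t : Fin G.cliqueNum} :
    t ∈ nonAdjIndices K x ↔ ¬ G.Adj (K t) x := by
  simp [nonAdjIndices]

variable [Fintype V]

theorem nonAdjIndices_nonempty (x : V) : (nonAdjIndices K x).Nonempty := by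
  obtain ⟨t, ht⟩ := exists_not_adj_of_top_embedding K x
  exact ⟨t, (mem_nonAdjIndices K).mpr ht⟩

noncomputable def cliqueSpan (x : V) : Fin G.cliqueNum × Fin G.cliqueNum :=
  ((nonAdjIndices K x).min' (nonAdjIndices_nonempty K x),
    (nonAdjIndices K x).max' (nonAdjIndices_nonempty K x))

theorem cliqueSpan_fst_le_snd (x : V) : (cliqueSpan K x).1 ≤ (cliqueSpan K x).2 :=
  min'_le_max' _ (nonAdjIndices_nonempty K x)

theorem not_adj_cliqueSpan_fst (x : V) : ¬ G.Adj (K (cliqueSpan K x).1) x :=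
  (mem_nonAdjIndices K).mp (min'_mem _ (nonAdjIndices_nonempty K x))

theorem not_adj_cliqueSpan_snd (x : V) : ¬ G.Adj (K (cliqueSpan K x).2) x :=
  (mem_nonAdjIndices K).mp (max'_mem _ (nonAdjIndices_nonempty K x))

theorem adj_of_notMem_Icc_cliqueSpan {x : V} {t : Fin G.cliqueNum}
    (ht : t ∉ Icc (cliqueSpan K x).1 (cliqueSpan K x).2) : G.Adj (K t) x := by
  by_contra h
  have hmem := (mem_nonAdjIndices K).mpr h
  exact ht (mem_Icc.mpr ⟨min'_le _ _ hmem, le_max' _ _ hmem⟩)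

def outsideClique (i j : Fin G.cliqueNum) :
    (⊤ : SimpleGraph ↥(Icc i j)ᶜ) ↪g G :=
  K.comp (.completeGraph (.subtype _))

theorem adj_outsideClique {i j : Fin G.cliqueNum} (a : ↥(Icc i j)ᶜ) {x : V}
    (hx : x ∈ cliqueSpan K ⁻¹' {(i, j)}) : G.Adj (outsideClique K i j a) x := by
  rw [Set.mem_preimage, Set.mem_singleton_iff] at hx
  exact adj_of_notMem_Icc_cliqueSpan K (hx ▸ mem_compl.mp a.2)

theorem cliqueNum_induce_cliqueSpan_fiber_le {i j : Fin G.cliqueNum} (hij : i ≤ j) :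
    (G.induce (cliqueSpan K ⁻¹' {(i, j)})).cliqueNum ≤ (j : ℕ) - i + 1 := by
  have := cliqueNum_induce_add_card_le (outsideClique K i j) fun a _ ↦ adj_outsideClique K a
  rw [Fin.card_coe_compl_Icc] at this
  have := j.isLt
  have : (i : ℕ) ≤ j := hij
  omega

theorem bFree_induce_cliqueSpan_fiber {n d : ℕ} (hG : BFree n (d + 1) G) (hn : 2 * (d + 2) ≤ n)
    {i j : Fin G.cliqueNum} (hij : i < j) :
    BFree (max (n + ((j : ℕ) - i + 1) - G.cliqueNum - 2) (2 * (d + 1))) d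
      (G.induce (cliqueSpan K ⁻¹' {(i, j)})) := by
  set m := max (n + ((j : ℕ) - i + 1) - G.cliqueNum - 2) (2 * (d + 1))
  have hij' : (i : ℕ) < j := hij
  obtain ⟨ι⟩ : Nonempty (Fin (n - m - 2) ↪ ↥(Icc i j)ᶜ) := by
    refine Function.Embedding.nonempty_of_card_le ?_
    rw [Fin.card_coe_compl_Icc, Fintype.card_fin]
    have := j.isLt
    omega
  refine bFree_induce_of_join hG (le_max_right _ _) (max_le (by omega) (by omega))
    ((outsideClique K i j).comp (.completeGraph ι))
    (K.comp (.completeGraph (Function.Embedding.embFinTwo hij.ne))) ?_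
    (fun a _ ↦ adj_outsideClique K (ι a)) ?_
  · intro a b
    refine K.map_adj_iff.mpr fun h ↦ mem_compl.mp (ι a).2 ?_
    fin_cases b <;> simp [Function.Embedding.embFinTwo_apply_zero,
      Function.Embedding.embFinTwo_apply_one] at h <;> simp [h, hij.le]
  · intro b x hx
    rw [Set.mem_preimage, Set.mem_singleton_iff] at hx
    fin_cases b
    · simpa [hx, Function.Embedding.embFinTwo_apply_zero] using not_adj_cliqueSpan_fst K x
    · simpa [hx, Function.Embedding.embFinTwo_apply_one] using not_adj_cliqueSpan_snd K x

end SimpleGraph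

def BFreeColorable (n d : ℕ) : Prop :=
  ∀ (V : Type) [Fintype V] (G : SimpleGraph V), BFree n d G → G.Colorable (g n d G.cliqueNum)

theorem bFreeColorable_zero {n : ℕ} (hn : 2 ≤ n) : BFreeColorable n 0 := by
  intro V _ G hG
  classical
  unfold g
  split_ifs with hω
  · exact colorable_one_of_cliqueNum_le_one hω
  · have := colorable_succ_of_forall_degree_le (degree_le_of_bFree_zero (by omega) hG)
    rwa [show n - 2 + 1 = n - 1 by omega] at this

theorem bFreeColorable_succ {n d : ℕ} (ih : ∀ m, 2 * (d + 1) ≤ m → BFreeColorable m d)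
    (hn : 2 * (d + 2) ≤ n) : BFreeColorable n (d + 1) := by
  intro V _ G hG
  classical
  by_cases hω : G.cliqueNum ≤ 1
  · rw [g, if_pos hω]
    exact colorable_one_of_cliqueNum_le_one hω
  obtain ⟨s, hs⟩ := G.exists_isNClique_cliqueNum
  let K := topEmbeddingOfNotCliqueFree hs.not_cliqueFree
  rw [g, if_neg hω]
  refine (colorable_sum_of_fibers (cliqueSpan K) _
    (fun x ↦ by simpa using cliqueSpan_fst_le_snd K x) _ fun ⟨i, j⟩ hij ↦ ?_).mono
    (sum_pairs_le_eq_sum_Icc G.cliqueNum _).le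
  replace hij : i ≤ j := by simpa using hij
  rcases hij.lt_or_eq with hlt | rfl
  · exact (ih _ (le_max_right _ _) _ _ (bFree_induce_cliqueSpan_fiber K hG hn hlt)).mono
      (g_monotone (by omega) d (cliqueNum_induce_cliqueSpan_fiber_le K hij))
  · simpa [g_one] using colorable_one_of_cliqueNum_le_one
      (by simpa using cliqueNum_induce_cliqueSpan_fiber_le K le_rfl)

theorem bFreeColorable {n d : ℕ} (hn : 2 * (d + 1) ≤ n) : BFreeColorable n d := by
  induction d generalizing n with
  | zero => exact bFreeColorable_zero hn
  | succ d ih => exact bFreeColorable_succ (fun _ hm ↦ ih hm) hn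

theorem stmt_15 (d n : ℕ) (hn : 2 * (d + 1) ≤ n)
    (V : Type) [Fintype V] (G : SimpleGraph V) (hG : BFree n d G) :
    G.chromaticNumber ≤ (g n d G.cliqueNum : ℕ∞) :=
  (bFreeColorable hn V G hG).chromaticNumber_le
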